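/- Let (X, 𝒰) be a uniform space and f : X → X continuous. If the induced map f̄ : (𝒦(X), 𝒦(𝒰)) → (𝒦(X), 𝒦(𝒰)) is topologically transitive, then the Zadeh extension f̂ : (ℱ(X), 𝒰_∞) → (ℱ(X), 𝒰_∞) is topologically transitive. -/

import Mathlib

open Set Filter Topology
open scoped Uniformity

/-- The α-cut of a fuzzy set: `{x | α ≤ u x}` for `α ≠ 0`, and the support
(closure of `{x | 0 < u x}`) for `α = 0`. -/
noncomputable def fuzzyCut {X : Type*} [TopologicalSpace X] (u : X → ℝ) (α : ℝ) : Set X :=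
  if α = 0 then closure {x | 0 < u x} else {x | α ≤ u x}

/-- `u` belongs to `ℱ(X)`: a normal upper semicontinuous `[0,1]`-valued fuzzy set
with compact support. -/
structure IsFuzzySet {X : Type*} [TopologicalSpace X] (u : X → ℝ) : Prop where
  mem_Icc : ∀ x, u x ∈ Set.Icc (0:ℝ) 1
  usc : UpperSemicontinuous u
  normal : ∃ x, u x = 1
  compact_supp : IsCompact (closure {x | 0 < u x})

/-- The Zadeh extension of `f`: `x ↦ sup {u z : f z = x}` (and `0` when the
preimage is empty, since `sSup ∅ = 0` in `ℝ`). -/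
noncomputable def zadeh {X : Type*} (f : X → X) (u : X → ℝ) : X → ℝ :=
  fun x => sSup (u '' (f ⁻¹' {x}))

/-- `W(A) = ⋃ a ∈ A, W(a)` where `W(a) = {y | (a, y) ∈ W}`. -/
def ballImage {Y : Type*} (W : Set (Y × Y)) (A : Set Y) : Set Y :=
  {y | ∃ a ∈ A, (a, y) ∈ W}

/-- The Hausdorff entourage relation `𝒦[W]`: `(A,B) ∈ 𝒦[W]` iff `A ⊆ W(B)` and `B ⊆ W(A)`. -/
def KRel {Y : Type*} (W : Set (Y × Y)) (A B : Set Y) : Prop :=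
  A ⊆ ballImage W B ∧ B ⊆ ballImage W A

/-- The level-wise entourage relation `ℱ[W]`: `(u_α, v_α) ∈ 𝒦[W]` for all `α ∈ [0,1]`. -/
def FRel {X : Type*} [TopologicalSpace X] (W : Set (X × X)) (u v : X → ℝ) : Prop :=
  ∀ α ∈ Set.Icc (0:ℝ) 1, KRel W (fuzzyCut u α) (fuzzyCut v α)

/-- The Skorokhod entourage relation `G[W, ε]`: there is an increasing homeomorphism `t`
of `[0,1]` with `‖t‖ < ε` and `(u_α, v_{t α}) ∈ 𝒦[W]` for all `α ∈ [0,1]`. -/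
def SkoRel {X : Type*} [TopologicalSpace X] (W : Set (X × X)) (ε : ℝ) (u v : X → ℝ) : Prop :=
  ∃ t : ℝ → ℝ, StrictMonoOn t (Set.Icc 0 1) ∧ t 0 = 0 ∧ t 1 = 1 ∧
    Set.MapsTo t (Set.Icc 0 1) (Set.Icc 0 1) ∧ Set.SurjOn t (Set.Icc 0 1) (Set.Icc 0 1) ∧
    (∀ α ∈ Set.Icc (0:ℝ) 1, |t α - α| < ε) ∧
    (∀ α ∈ Set.Icc (0:ℝ) 1, KRel W (fuzzyCut u α) (fuzzyCut v (t α)))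

/-- The sendograph of `u`: `end(u) ∩ (u₀ × [0,1])`. -/
noncomputable def send {X : Type*} [TopologicalSpace X] (u : X → ℝ) : Set (X × ℝ) :=
  {p | p.1 ∈ fuzzyCut u 0 ∧ p.2 ∈ Set.Icc (0:ℝ) 1 ∧ p.2 ≤ u p.1}

/-- The product entourage `U × V_ε` on `X × [0,1]`. -/
def prodEnt {X : Type*} (U : Set (X × X)) (ε : ℝ) : Set ((X × ℝ) × (X × ℝ)) :=
  {p | (p.1.1, p.2.1) ∈ U ∧ |p.1.2 - p.2.2| < ε}

/-- The sendograph entourage relation `S[U, ε]`. -/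
noncomputable def SendRel {X : Type*} [TopologicalSpace X] (U : Set (X × X)) (ε : ℝ)
    (u v : X → ℝ) : Prop :=
  KRel (prodEnt U ε) (send u) (send v)

/-- `u_{α⁺} = closure (⋃ β ∈ (α, 1], u_β)`, the right limit of the level map. -/
noncomputable def cutPlus {X : Type*} [TopologicalSpace X] (u : X → ℝ) (α : ℝ) : Set X :=
  closure (⋃ β ∈ Set.Ioc α 1, fuzzyCut u β)

/-- `B` belongs to the Vietoris basic open set `⟨V 0, …, V (k-1)⟩`. -/
def inVietoris {Y : Type*} (B : Set Y) (k : ℕ) (V : Fin k → Set Y) : Prop :=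
  B ⊆ (⋃ i, V i) ∧ ∀ i, (B ∩ V i).Nonempty

/-!
The cut map `α ↦ u_α` of a fuzzy set is left-continuous and has right limits `cutPlus u α` in
the Hausdorff uniformity, so by compactness of `[0, 1]` finitely many cuts approximate all of
them; replacing each by a finite net whose points carry the level of the cut gives a finite set
of weighted points approximating `u` level by level, and likewise for `v`. Hyperspace
transitivity makes `f` weakly mixing of all orders, so for one time `n` and every pair `(p, q)`
of such points some point near `p` is sent by `f^[n]` near `q`. The finite-valued fuzzy set
`stepFuzzy R` carried by these points, each with the lower of the two levels, is close to `u`,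
and its `n`-th Zadeh image is close to `v` because the cuts of the Zadeh image of a
finite-valued fuzzy set are the images of its cuts (up to closure at level `0`).
-/

open scoped SetRel

section

variable {X : Type*}

section Entourage

variable {W W' : Set (X × X)} {A B C : Set X}

lemma ballImage_mono (h : A ⊆ B) : ballImage W A ⊆ ballImage W B :=
  SetRel.image_subset_image h

lemma ballImage_mono_left (h : W ⊆ W') : ballImage W A ⊆ ballImage W' A :=
  SetRel.image_subset_image_left h

lemma ballImage_comp : ballImage (W ○ W') A = ballImage W' (ballImage W A) :=
  SetRel.image_comp W W' A

lemma KRel.mono (h : KRel W A B) (hW : W ⊆ W') : KRel W' A B :=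
  ⟨h.1.trans (ballImage_mono_left hW), h.2.trans (ballImage_mono_left hW)⟩

variable [UniformSpace X]

lemma subset_ballImage (hW : W ∈ 𝓤 X) : A ⊆ ballImage W A :=
  fun a ha => ⟨a, ha, refl_mem_uniformity hW⟩

lemma closure_subset_ballImage (hW : W ∈ 𝓤 X) : closure A ⊆ ballImage W A := by
  intro x hx
  obtain ⟨a, hax, haA⟩ := mem_closure_iff_nhds.1 hx _ (mem_nhds_right x hW)
  exact ⟨a, haA, hax⟩

lemma isOpen_ballImage (hW : IsOpen W) : IsOpen (ballImage W A) := by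
  refine isOpen_iff_forall_mem_open.2 fun y ⟨a, ha, hay⟩ => ?_
  exact ⟨UniformSpace.ball a W, fun z hz => ⟨a, ha, hz⟩, UniformSpace.isOpen_ball a hW, hay⟩

lemma KRel.of_subset_closure (hW : W ∈ 𝓤 X) (h : KRel W A B) (hBC : B ⊆ C)
    (hCB : C ⊆ closure B) : KRel (W ○ W) A C := by
  have := isRefl_of_mem_uniformity hW
  refine ⟨h.1.trans ((ballImage_mono hBC).trans (ballImage_mono_left SetRel.left_subset_comp)), ?_⟩
  rw [ballImage_comp]
  exact hCB.trans ((closure_subset_ballImage hW).trans (ballImage_mono h.2))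

lemma exists_isOpen_isSymm_comp_subset {E : Set (X × X)} (hE : E ∈ 𝓤 X) :
    ∃ Ω ∈ 𝓤 X, IsOpen Ω ∧ SetRel.IsSymm Ω ∧ (Ω ○ (Ω ○ Ω)) ○ (Ω ○ (Ω ○ Ω)) ⊆ E := by
  obtain ⟨W₁, hW₁, hW₁E⟩ := comp_mem_uniformity_sets hE
  obtain ⟨W₂, hW₂, hW₂W₁⟩ := comp3_mem_uniformity hW₁
  obtain ⟨Ω, hΩ, hΩo, hΩs, hΩW₂⟩ := comp_open_symm_mem_uniformity_sets hW₂
  have hΩ₂ : Ω ⊆ W₂ := (subset_comp_self_of_mem_uniformity hΩ).trans hΩW₂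
  have hΩ₃ : Ω ○ (Ω ○ Ω) ⊆ W₁ := (by gcongr : Ω ○ (Ω ○ Ω) ⊆ W₂ ○ (W₂ ○ W₂)).trans hW₂W₁
  exact ⟨Ω, hΩ, hΩo, hΩs, (by gcongr : _ ⊆ W₁ ○ W₁).trans hW₁E⟩

end Entourage

section Cut

variable [TopologicalSpace X] {u : X → ℝ} {α β l : ℝ}

lemma fuzzyCut_of_pos (hα : 0 < α) : fuzzyCut u α = {x | α ≤ u x} := if_neg hα.ne'

lemma fuzzyCut_zero : fuzzyCut u 0 = closure {x | 0 < u x} := if_pos rfl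

lemma fuzzyCut_anti (hα : 0 ≤ α) (hαβ : α ≤ β) : fuzzyCut u β ⊆ fuzzyCut u α := by
  rcases hα.eq_or_lt with rfl | hα
  · rcases hαβ.eq_or_lt with rfl | hβ
    · rfl
    · rw [fuzzyCut_of_pos hβ, fuzzyCut_zero]
      exact fun x hx => subset_closure (hβ.trans_le hx)
  · rw [fuzzyCut_of_pos hα, fuzzyCut_of_pos (hα.trans_le hαβ)]
    exact fun x hx => hαβ.trans hx

lemma iInter_fuzzyCut_subset {c : ℝ} (hc : 0 < c) :
    ⋂ δ : Ioo 0 c, fuzzyCut u δ ⊆ fuzzyCut u c := by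
  intro x hx
  rw [fuzzyCut_of_pos hc]
  refine le_of_forall_lt_imp_le_of_dense fun (a : ℝ) ha => ?_
  have hδ : max a (c / 2) ∈ Ioo 0 c :=
    ⟨lt_max_of_lt_right (half_pos hc), max_lt ha (half_lt_self hc)⟩
  have := mem_iInter.1 hx ⟨_, hδ⟩
  rw [fuzzyCut_of_pos hδ.1] at this
  exact (le_max_left _ _).trans this

lemma fuzzyCut_subset_cutPlus (hα : α ∈ Ioc l 1) : fuzzyCut u α ⊆ cutPlus u l :=
  (subset_biUnion_of_mem (u := fun β => fuzzyCut u β) hα).trans subset_closure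

lemma IsFuzzySet.isClosed_fuzzyCut (hu : IsFuzzySet u) (hα : 0 ≤ α) :
    IsClosed (fuzzyCut u α) := by
  rcases hα.eq_or_lt with rfl | hα
  · rw [fuzzyCut_zero]
    exact isClosed_closure
  · rw [fuzzyCut_of_pos hα]
    exact upperSemicontinuous_iff_isClosed_preimage.1 hu.usc α

lemma IsFuzzySet.isCompact_fuzzyCut (hu : IsFuzzySet u) (hα : 0 ≤ α) :
    IsCompact (fuzzyCut u α) :=
  hu.compact_supp.of_isClosed_subset (hu.isClosed_fuzzyCut hα)
    (fuzzyCut_zero (u := u) ▸ fuzzyCut_anti le_rfl hα)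

lemma IsFuzzySet.fuzzyCut_one_nonempty (hu : IsFuzzySet u) : (fuzzyCut u 1).Nonempty := by
  obtain ⟨x, hx⟩ := hu.normal
  exact ⟨x, by rw [fuzzyCut_of_pos one_pos]; exact hx.ge⟩

lemma IsFuzzySet.fuzzyCut_zero_subset_cutPlus (hu : IsFuzzySet u) :
    fuzzyCut u 0 ⊆ cutPlus u 0 := by
  rw [fuzzyCut_zero]
  refine closure_mono fun x hx => mem_biUnion (x := u x) ⟨hx, (hu.mem_Icc x).2⟩ ?_
  rw [fuzzyCut_of_pos hx]
  exact le_refl (u x)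

lemma IsFuzzySet.isCompact_cutPlus (hu : IsFuzzySet u) (hl : 0 ≤ l) : IsCompact (cutPlus u l) :=
  hu.compact_supp.of_isClosed_subset isClosed_closure <| fuzzyCut_zero (u := u) ▸
    closure_minimal (iUnion₂_subset fun _ hβ => fuzzyCut_anti le_rfl (hl.trans hβ.1.le))
      (hu.isClosed_fuzzyCut le_rfl)

end Cut

section CutUniform

variable [UniformSpace X] {u : X → ℝ} {W : Set (X × X)} {c l : ℝ}

lemma IsFuzzySet.eventually_fuzzyCut_subset_ballImage (hu : IsFuzzySet u) (hW : W ∈ 𝓤 X)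
    (hWo : IsOpen W) (hc : 0 < c) :
    ∀ᶠ α in 𝓝[≤] c, fuzzyCut u α ⊆ ballImage W (fuzzyCut u c) := by
  have : Nonempty (Ioo 0 c) := ⟨⟨c / 2, half_pos hc, half_lt_self hc⟩⟩
  obtain ⟨⟨δ, hδ0, hδc⟩, hδ⟩ := exists_subset_nhds_of_isCompact'
    (V := fun δ : Ioo 0 c => fuzzyCut u δ)
    (fun δ₁ δ₂ => ⟨⟨max δ₁ δ₂, lt_max_of_lt_left δ₁.2.1, max_lt δ₁.2.2 δ₂.2.2⟩,
      fuzzyCut_anti δ₁.2.1.le (le_max_left _ _), fuzzyCut_anti δ₂.2.1.le (le_max_right _ _)⟩)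
    (fun δ => hu.isCompact_fuzzyCut δ.2.1.le) (fun δ => hu.isClosed_fuzzyCut δ.2.1.le)
    fun x hx => (isOpen_ballImage hWo).mem_nhds (subset_ballImage hW (iInter_fuzzyCut_subset hc hx))
  filter_upwards [Ioc_mem_nhdsLE hδc] with α hα
  exact (fuzzyCut_anti hδ0.le hα.1.le).trans hδ

lemma IsFuzzySet.exists_cutPlus_subset_ballImage (hu : IsFuzzySet u) (hW : W ∈ 𝓤 X)
    (hWo : IsOpen W) (hl : l ∈ Ico 0 1) :
    ∃ e ∈ Ioc l 1, cutPlus u l ⊆ ballImage W (fuzzyCut u e) := by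
  have : Nonempty (Ioc l 1) := ⟨⟨1, hl.2, le_rfl⟩⟩
  have hcover : cutPlus u l ⊆ ⋃ e : Ioc l 1, ballImage W (fuzzyCut u e) := by
    refine (closure_subset_ballImage hW).trans fun y ⟨a, ha, hay⟩ => ?_
    obtain ⟨β, hβ, haβ⟩ := mem_iUnion₂.1 ha
    exact mem_iUnion.2 ⟨⟨β, hβ⟩, a, haβ, hay⟩
  have hdir : Directed (· ⊆ ·) fun e : Ioc l 1 => ballImage W (fuzzyCut u e) := by
    intro e₁ e₂
    have h0 : 0 ≤ min (e₁ : ℝ) e₂ := hl.1.trans (le_min e₁.2.1.le e₂.2.1.le)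
    exact ⟨⟨min e₁ e₂, lt_min e₁.2.1 e₂.2.1, min_le_of_left_le e₁.2.2⟩,
      ballImage_mono (fuzzyCut_anti h0 (min_le_left _ _)),
      ballImage_mono (fuzzyCut_anti h0 (min_le_right _ _))⟩
  obtain ⟨⟨e, he⟩, hsub⟩ := (hu.isCompact_cutPlus hl.1).elim_directed_cover _
    (fun _ => isOpen_ballImage hWo) hcover hdir
  exact ⟨e, he, hsub⟩

end CutUniform

section LevelNet

variable {P P' : Set (X × ℝ)} {α : ℝ}

def upperPoints (P : Set (X × ℝ)) (α : ℝ) : Set X := {x | ∃ c, α ≤ c ∧ (x, c) ∈ P}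

lemma upperPoints_mono (h : P ⊆ P') : upperPoints P α ⊆ upperPoints P' α :=
  fun _ ⟨c, hc, hxc⟩ => ⟨c, hc, h hxc⟩

lemma Set.Finite.upperPoints (hP : P.Finite) : (upperPoints P α).Finite :=
  (hP.image Prod.fst).subset fun x ⟨c, _, hxc⟩ => ⟨(x, c), hxc, rfl⟩

lemma upperPoints_range {ι : Type*} (y : ι → X) (b : ι → ℝ) (α : ℝ) :
    upperPoints (range fun i => (y i, b i)) α = y '' {i | α ≤ b i} := by
  ext x
  constructor
  · rintro ⟨c, hc, i, hi⟩
    obtain ⟨rfl, rfl⟩ := Prod.ext_iff.1 hi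
    exact ⟨i, hc, rfl⟩
  · rintro ⟨i, hi, rfl⟩
    exact ⟨b i, hi, i, rfl⟩

variable [TopologicalSpace X] {u : X → ℝ} {W Ω : Set (X × X)} {S S' : Set ℝ}

structure IsLevelNet (W : Set (X × X)) (u : X → ℝ) (S : Set ℝ) (P : Set (X × ℝ)) : Prop where
  finite : P.Finite
  level_mem : ∀ p ∈ P, p.2 ∈ Ioc (0 : ℝ) 1
  mem_fuzzyCut : ∀ p ∈ P, p.1 ∈ fuzzyCut u p.2
  fuzzyCut_subset : ∀ α ∈ S, fuzzyCut u α ⊆ ballImage W (upperPoints P α)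

lemma isLevelNet_empty : IsLevelNet W u ∅ ∅ :=
  ⟨finite_empty, fun _ h => h.elim, fun _ h => h.elim, fun _ h => h.elim⟩

lemma IsLevelNet.mono (h : IsLevelNet W u S P) (hS : S' ⊆ S) : IsLevelNet W u S' P :=
  { h with fuzzyCut_subset := fun α hα => h.fuzzyCut_subset α (hS hα) }

lemma IsLevelNet.union (h : IsLevelNet W u S P) (h' : IsLevelNet W u S' P') :
    IsLevelNet W u (S ∪ S') (P ∪ P') where
  finite := h.finite.union h'.finite
  level_mem p hp := hp.elim (h.level_mem p) (h'.level_mem p)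
  mem_fuzzyCut p hp := hp.elim (h.mem_fuzzyCut p) (h'.mem_fuzzyCut p)
  fuzzyCut_subset α hα := hα.elim
    (fun hα => (h.fuzzyCut_subset α hα).trans (ballImage_mono (upperPoints_mono subset_union_left)))
    (fun hα => (h'.fuzzyCut_subset α hα).trans
      (ballImage_mono (upperPoints_mono subset_union_right)))

lemma IsLevelNet.upperPoints_subset (h : IsLevelNet W u S P) (hα : 0 ≤ α) :
    upperPoints P α ⊆ fuzzyCut u α :=
  fun _ ⟨_, hc, hxc⟩ => fuzzyCut_anti hα hc (h.mem_fuzzyCut _ hxc)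

lemma IsLevelNet.exists_mem_one (h : IsLevelNet W u (Icc 0 1) P) (hu : IsFuzzySet u) :
    ∃ x, (x, 1) ∈ P := by
  obtain ⟨y, hy⟩ := hu.fuzzyCut_one_nonempty
  obtain ⟨x, ⟨c, hc, hxc⟩, -⟩ := h.fuzzyCut_subset 1 ⟨zero_le_one, le_rfl⟩ hy
  exact ⟨x, le_antisymm (h.level_mem _ hxc).2 hc ▸ hxc⟩

end LevelNet

section LevelNetUniform

variable [UniformSpace X] {u : X → ℝ} {W Ω : Set (X × X)} {P : Set (X × ℝ)} {α c : ℝ}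

lemma IsLevelNet.kRel (h : IsLevelNet W u (Icc 0 1) P) (hW : W ∈ 𝓤 X)
    (hα : α ∈ Icc 0 1) {B : Set X} (hB : KRel Ω (upperPoints P α) B) :
    KRel (Ω ○ W) (fuzzyCut u α) B := by
  have := isRefl_of_mem_uniformity hW
  refine ⟨?_, hB.2.trans ?_⟩
  · rw [ballImage_comp]
    exact (h.fuzzyCut_subset α hα).trans (ballImage_mono hB.1)
  · exact (ballImage_mono (h.upperPoints_subset hα.1)).trans
      (ballImage_mono_left SetRel.left_subset_comp)

/-- The witness is a finite `Ω`-net of `u_c`, every point tagged with level `c`. -/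
lemma IsFuzzySet.exists_isLevelNet_of_level (hu : IsFuzzySet u) (hΩ : Ω ∈ 𝓤 X)
    (hΩs : SetRel.IsSymm Ω) (hc : c ∈ Ioc 0 1) :
    ∃ P, IsLevelNet (Ω ○ Ω) u {α | α ≤ c ∧ fuzzyCut u α ⊆ ballImage Ω (fuzzyCut u c)} P := by
  obtain ⟨N, hNc, hNfin, hcN⟩ := (hu.isCompact_fuzzyCut hc.1.le).totallyBounded.exists_subset hΩ
  refine ⟨N ×ˢ {c}, hNfin.prod (finite_singleton c), ?_, ?_, ?_⟩
  · rintro ⟨x, c'⟩ ⟨-, rfl⟩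
    exact hc
  · rintro ⟨x, c'⟩ ⟨hx, rfl⟩
    exact hNc hx
  · rintro α ⟨hαc, hα⟩
    rw [ballImage_comp]
    refine hα.trans (ballImage_mono fun y hy => ?_)
    obtain ⟨x, hx, hyx⟩ := mem_iUnion₂.1 (hcN hy)
    exact ⟨x, ⟨c, hαc, hx, rfl⟩, hΩs.symm _ _ hyx⟩

lemma IsFuzzySet.exists_isLevelNet (hu : IsFuzzySet u) (hΩ : Ω ∈ 𝓤 X) (hΩo : IsOpen Ω)
    (hΩs : SetRel.IsSymm Ω) : ∃ P, IsLevelNet (Ω ○ Ω) u (Icc 0 1) P := by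
  refine isCompact_Icc.induction_on ⟨∅, isLevelNet_empty⟩
    (fun S T hST ⟨P, hP⟩ => ⟨P, hP.mono hST⟩)
    (fun S T ⟨P, hP⟩ ⟨Q, hQ⟩ => ⟨P ∪ Q, hP.union hQ⟩) fun x hx => ?_
  set G : ℝ → Set ℝ := fun c => {α | α ≤ c ∧ fuzzyCut u α ⊆ ballImage Ω (fuzzyCut u c)}
  have hG : ∀ c ∈ Ioc 0 1, ∃ P, IsLevelNet (Ω ○ Ω) u (G c) P :=
    fun c hc => hu.exists_isLevelNet_of_level hΩ hΩs hc
  have left : ∀ c, 0 < c → G c ∈ 𝓝[≤] c := fun c hc =>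
    inter_mem self_mem_nhdsWithin (hu.eventually_fuzzyCut_subset_ballImage hΩ hΩo hc)
  have right : ∀ l ∈ Ico 0 1, ∃ e ∈ Ioc l 1, Ioc l e ⊆ G e ∧ (l = 0 → Icc 0 e ⊆ G e) := by
    intro l hl
    obtain ⟨e, he, hsub⟩ := hu.exists_cutPlus_subset_ballImage hΩ hΩo hl
    refine ⟨e, he, fun α hα => ⟨hα.2, ?_⟩, ?_⟩
    · exact (fuzzyCut_subset_cutPlus ⟨hα.1, hα.2.trans he.2⟩).trans hsub
    · rintro rfl α ⟨hα0, hαe⟩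
      refine ⟨hαe, ?_⟩
      rcases hα0.eq_or_lt with rfl | hα0
      · exact hu.fuzzyCut_zero_subset_cutPlus.trans hsub
      · exact (fuzzyCut_subset_cutPlus ⟨hα0, hαe.trans he.2⟩).trans hsub
  rcases hx.1.eq_or_lt with rfl | hx0
  · obtain ⟨e, he, -, he0⟩ := right 0 ⟨le_rfl, one_pos⟩
    exact ⟨G e, mem_of_superset (nhdsWithin_mono _ Icc_subset_Ici_self (Icc_mem_nhdsGE he.1))
      (he0 rfl), hG e he⟩
  rcases hx.2.eq_or_lt with rfl | hx1
  · exact ⟨G 1, nhdsWithin_mono _ Icc_subset_Iic_self (left 1 one_pos), hG 1 ⟨one_pos, le_rfl⟩⟩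
  obtain ⟨e, he, heG, -⟩ := right x ⟨hx.1, hx1⟩
  obtain ⟨P, hP⟩ := hG x ⟨hx0, hx.2⟩
  obtain ⟨Q, hQ⟩ := hG e ⟨hx0.trans he.1, he.2⟩
  refine ⟨G x ∪ G e, mem_nhdsWithin_of_mem_nhds ?_, P ∪ Q, hP.union hQ⟩
  rw [← nhdsLE_sup_nhdsGT, mem_sup]
  exact ⟨mem_of_superset (left x hx0) subset_union_left,
    mem_of_superset (Ioc_mem_nhdsGT he.1) (heG.trans subset_union_right)⟩

end LevelNetUniform

lemma Real.le_sSup_iff_of_finite {S : Set ℝ} (hS : S.Finite) {t : ℝ} (ht : 0 < t) :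
    t ≤ sSup S ↔ ∃ s ∈ S, t ≤ s := by
  rcases S.eq_empty_or_nonempty with rfl | hne
  · simp [ht.not_ge]
  · exact ⟨fun h => ⟨_, hne.csSup_mem hS, h⟩,
      fun ⟨s, hs, hts⟩ => hts.trans (le_csSup hS.bddAbove hs)⟩

lemma Real.lt_sSup_iff_of_finite {S : Set ℝ} (hS : S.Finite) {t : ℝ} (ht : 0 ≤ t) :
    t < sSup S ↔ ∃ s ∈ S, t < s := by
  rcases S.eq_empty_or_nonempty with rfl | hne
  · simp [ht.not_gt]
  · exact lt_csSup_iff hS.bddAbove hne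

lemma Real.sSup_mem_insert_zero {S : Set ℝ} (hS : S.Finite) : sSup S ∈ insert 0 S := by
  rcases S.eq_empty_or_nonempty with rfl | hne
  · exact Or.inl Real.sSup_empty
  · exact Or.inr (hne.csSup_mem hS)

section StepFuzzy

variable [TopologicalSpace X] {R : Set (X × ℝ)} {y : X} {t α : ℝ}

/-- Vanishes outside every `closure {x}`, `(x, c) ∈ R`, because `sSup ∅ = 0`. -/
noncomputable def stepFuzzy (R : Set (X × ℝ)) (y : X) : ℝ :=
  sSup {c | ∃ x, (x, c) ∈ R ∧ y ∈ closure {x}}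

lemma Set.Finite.stepFuzzy_levels (hR : R.Finite) :
    {c | ∃ x, (x, c) ∈ R ∧ y ∈ closure {x}}.Finite :=
  (hR.image Prod.snd).subset fun c ⟨x, hxc, _⟩ => ⟨(x, c), hxc, rfl⟩

lemma finite_range_stepFuzzy (hR : R.Finite) : (range (stepFuzzy R)).Finite :=
  ((hR.image Prod.snd).insert 0).subset <| range_subset_iff.2 fun _ =>
    insert_subset_insert (fun c (⟨x, hxc, _⟩ : ∃ x, (x, c) ∈ R ∧ _) => ⟨(x, c), hxc, rfl⟩)
      (Real.sSup_mem_insert_zero hR.stepFuzzy_levels)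

lemma le_stepFuzzy_iff (hR : R.Finite) (ht : 0 < t) :
    t ≤ stepFuzzy R y ↔ ∃ x c, t ≤ c ∧ (x, c) ∈ R ∧ y ∈ closure {x} := by
  rw [stepFuzzy, Real.le_sSup_iff_of_finite hR.stepFuzzy_levels ht]
  exact ⟨fun ⟨c, ⟨x, hxc, hy⟩, htc⟩ => ⟨x, c, htc, hxc, hy⟩,
    fun ⟨x, c, htc, hxc, hy⟩ => ⟨c, ⟨x, hxc, hy⟩, htc⟩⟩

lemma lt_stepFuzzy_iff (hR : R.Finite) (ht : 0 ≤ t) :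
    t < stepFuzzy R y ↔ ∃ x c, t < c ∧ (x, c) ∈ R ∧ y ∈ closure {x} := by
  rw [stepFuzzy, Real.lt_sSup_iff_of_finite hR.stepFuzzy_levels ht]
  exact ⟨fun ⟨c, ⟨x, hxc, hy⟩, htc⟩ => ⟨x, c, htc, hxc, hy⟩,
    fun ⟨x, c, htc, hxc, hy⟩ => ⟨c, ⟨x, hxc, hy⟩, htc⟩⟩

lemma mem_closure_upperPoints (hR : R.Finite) :
    y ∈ closure (upperPoints R t) ↔ ∃ x c, t ≤ c ∧ (x, c) ∈ R ∧ y ∈ closure {x} := by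
  have : upperPoints R t = ⋃ p ∈ {p ∈ R | t ≤ p.2}, {p.1} := by
    ext x
    simp [upperPoints, and_comm]
  rw [this, (hR.subset (sep_subset _ _)).closure_biUnion]
  simp [and_comm, and_assoc]

lemma fuzzyCut_stepFuzzy (hR : R.Finite) (hpos : ∀ r ∈ R, 0 < r.2) (hα : 0 ≤ α) :
    fuzzyCut (stepFuzzy R) α = closure (upperPoints R α) := by
  rcases hα.eq_or_lt with rfl | hα
  · suffices {y | 0 < stepFuzzy R y} = closure (upperPoints R 0) by
      rw [fuzzyCut_zero, this, closure_closure]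
    ext y
    refine (lt_stepFuzzy_iff hR le_rfl).trans (Iff.trans ?_ (mem_closure_upperPoints hR).symm)
    exact ⟨fun ⟨x, c, _, hxc, hy⟩ => ⟨x, c, (hpos _ hxc).le, hxc, hy⟩,
      fun ⟨x, c, _, hxc, hy⟩ => ⟨x, c, hpos _ hxc, hxc, hy⟩⟩
  · ext y
    rw [fuzzyCut_of_pos hα]
    exact (le_stepFuzzy_iff hR hα).trans (mem_closure_upperPoints hR).symm

lemma stepFuzzy_mem_Icc (hlev : ∀ r ∈ R, r.2 ∈ Ioc 0 1) : stepFuzzy R y ∈ Icc 0 1 :=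
  ⟨Real.sSup_nonneg fun _ ⟨_, hxc, _⟩ => (hlev _ hxc).1.le,
    Real.sSup_le (fun _ ⟨_, hxc, _⟩ => (hlev _ hxc).2) zero_le_one⟩

lemma isFuzzySet_stepFuzzy [R1Space X] (hR : R.Finite) (hlev : ∀ r ∈ R, r.2 ∈ Ioc 0 1)
    (hone : ∃ x, (x, 1) ∈ R) : IsFuzzySet (stepFuzzy R) where
  mem_Icc _ := stepFuzzy_mem_Icc hlev
  usc := by
    refine upperSemicontinuous_iff_isClosed_preimage.2 fun t => ?_
    rcases le_or_gt t 0 with ht | ht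
    · convert isClosed_univ
      exact eq_univ_of_forall fun y => ht.trans (stepFuzzy_mem_Icc hlev).1
    · have : stepFuzzy R ⁻¹' Ici t = fuzzyCut (stepFuzzy R) t := (fuzzyCut_of_pos ht).symm
      rw [this, fuzzyCut_stepFuzzy hR (fun r hr => (hlev r hr).1) ht.le]
      exact isClosed_closure
  normal := by
    obtain ⟨x, hx⟩ := hone
    exact ⟨x, le_antisymm (stepFuzzy_mem_Icc hlev).2
      ((le_stepFuzzy_iff hR one_pos).2 ⟨x, 1, le_rfl, hx, subset_closure rfl⟩)⟩
  compact_supp := by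
    rw [← fuzzyCut_zero, fuzzyCut_stepFuzzy hR (fun r hr => (hlev r hr).1) le_rfl]
    exact hR.upperPoints.isCompact.closure

end StepFuzzy

section Zadeh

variable {f : X → X} {φ : X → ℝ} {x : X} {t α : ℝ}

lemma le_zadeh_iff (hφ : (range φ).Finite) (ht : 0 < t) :
    t ≤ zadeh f φ x ↔ x ∈ f '' {z | t ≤ φ z} := by
  rw [zadeh, Real.le_sSup_iff_of_finite (hφ.subset (image_subset_range _ _)) ht]
  constructor
  · rintro ⟨_, ⟨z, hz, rfl⟩, hts⟩
    exact ⟨z, hts, hz⟩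
  · rintro ⟨z, hz, hzx⟩
    exact ⟨φ z, ⟨z, hzx, rfl⟩, hz⟩

lemma lt_zadeh_iff (hφ : (range φ).Finite) (ht : 0 ≤ t) :
    t < zadeh f φ x ↔ x ∈ f '' {z | t < φ z} := by
  rw [zadeh, Real.lt_sSup_iff_of_finite (hφ.subset (image_subset_range _ _)) ht]
  constructor
  · rintro ⟨_, ⟨z, hz, rfl⟩, hts⟩
    exact ⟨z, hts, hz⟩
  · rintro ⟨z, hz, hzx⟩
    exact ⟨φ z, ⟨z, hzx, rfl⟩, hz⟩

lemma finite_range_zadeh (hφ : (range φ).Finite) : (range (zadeh f φ)).Finite :=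
  (hφ.insert 0).subset <| range_subset_iff.2 fun x =>
    insert_subset_insert (image_subset_range _ _)
      (Real.sSup_mem_insert_zero (hφ.subset (image_subset_range φ (f ⁻¹' {x}))))

lemma finite_range_zadeh_iterate (hφ : (range φ).Finite) (n : ℕ) :
    (range ((zadeh f)^[n] φ)).Finite := by
  induction n with
  | zero => exact hφ
  | succ n ih =>
    rw [Function.iterate_succ_apply']
    exact finite_range_zadeh ih

lemma setOf_le_zadeh_iterate (hφ : (range φ).Finite) (ht : 0 < t) (n : ℕ) :
    {x | t ≤ (zadeh f)^[n] φ x} = f^[n] '' {z | t ≤ φ z} := by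
  induction n with
  | zero => simp
  | succ n ih =>
    rw [Function.iterate_succ_apply', Function.iterate_succ', image_comp, ← ih]
    ext x
    exact le_zadeh_iff (finite_range_zadeh_iterate hφ n) ht

lemma setOf_lt_zadeh_iterate (hφ : (range φ).Finite) (ht : 0 ≤ t) (n : ℕ) :
    {x | t < (zadeh f)^[n] φ x} = f^[n] '' {z | t < φ z} := by
  induction n with
  | zero => simp
  | succ n ih =>
    rw [Function.iterate_succ_apply', Function.iterate_succ', image_comp, ← ih]
    ext x
    exact lt_zadeh_iff (finite_range_zadeh_iterate hφ n) ht

variable [TopologicalSpace X]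

lemma image_fuzzyCut_subset_fuzzyCut_zadeh_iterate (hf : Continuous f)
    (hφ : (range φ).Finite) (hα : 0 ≤ α) (n : ℕ) :
    f^[n] '' fuzzyCut φ α ⊆ fuzzyCut ((zadeh f)^[n] φ) α := by
  rcases hα.eq_or_lt with rfl | hα
  · rw [fuzzyCut_zero, fuzzyCut_zero, setOf_lt_zadeh_iterate hφ le_rfl n]
    exact image_closure_subset_closure_image (hf.iterate n)
  · rw [fuzzyCut_of_pos hα, fuzzyCut_of_pos hα, setOf_le_zadeh_iterate hφ hα n]

lemma fuzzyCut_zadeh_iterate_subset_closure (hφ : (range φ).Finite) (hα : 0 ≤ α) (n : ℕ) :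
    fuzzyCut ((zadeh f)^[n] φ) α ⊆ closure (f^[n] '' fuzzyCut φ α) := by
  rcases hα.eq_or_lt with rfl | hα
  · rw [fuzzyCut_zero, fuzzyCut_zero, setOf_lt_zadeh_iterate hφ le_rfl n]
    exact closure_mono (image_mono subset_closure)
  · rw [fuzzyCut_of_pos hα, fuzzyCut_of_pos hα, setOf_le_zadeh_iterate hφ hα n]
    exact subset_closure

lemma fuzzyCut_zadeh_iterate_stepFuzzy {R : Set (X × ℝ)} (hf : Continuous f) (hR : R.Finite)
    (hpos : ∀ r ∈ R, 0 < r.2) (hα : 0 ≤ α) (n : ℕ) :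
    f^[n] '' upperPoints R α ⊆ fuzzyCut ((zadeh f)^[n] (stepFuzzy R)) α ∧
      fuzzyCut ((zadeh f)^[n] (stepFuzzy R)) α ⊆ closure (f^[n] '' upperPoints R α) := by
  have hw := finite_range_stepFuzzy hR
  have hcut := fuzzyCut_stepFuzzy hR hpos hα
  refine ⟨(image_mono (hcut ▸ subset_closure)).trans
    (image_fuzzyCut_subset_fuzzyCut_zadeh_iterate hf hw hα n), ?_⟩
  rw [← closure_image_closure (hf.iterate n), ← hcut]
  exact fuzzyCut_zadeh_iterate_subset_closure hw hα n

end Zadeh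

section Dynamics

variable [UniformSpace X] {f : X → X}

def HyperspaceTransitive (f : X → X) : Prop :=
  ∀ K L : Set X, IsCompact K → K.Nonempty → IsCompact L → L.Nonempty →
    ∀ U ∈ 𝓤 X, ∀ V ∈ 𝓤 X, ∃ n : ℕ, 0 < n ∧ ∃ A : Set X, IsCompact A ∧ A.Nonempty ∧
      KRel U K A ∧ KRel V L (f^[n] '' A)

/-- Test transitivity with `K = {x₀}`, `x₀ ∈ S`, and `L` a finite set with one point in each
target (plus `x₀`, so that `L` is nonempty). -/
lemma HyperspaceTransitive.exists_iterate_inter_preimage_nonempty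
    (htr : HyperspaceTransitive f) {S : Set X} (hSo : IsOpen S) (hS : S.Nonempty)
    {𝒯 : Set (Set X)} (h𝒯 : 𝒯.Finite) (hT : ∀ T ∈ 𝒯, IsOpen T ∧ T.Nonempty) :
    ∃ n, 0 < n ∧ ∀ T ∈ 𝒯, (S ∩ f^[n] ⁻¹' T).Nonempty := by
  obtain ⟨x₀, hx₀⟩ := hS
  have : Nonempty X := ⟨x₀⟩
  choose! q hqT using fun T hT' => (hT T hT').2
  have hV : (⋂ T ∈ 𝒯, {p : X × X | p.2 = q T → p.1 ∈ T}) ∈ 𝓤 X :=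
    (biInter_mem h𝒯).2 fun T hT' =>
      mem_nhds_uniformity_iff_left.1 ((hT T hT').1.mem_nhds (hqT T hT'))
  obtain ⟨n, hn, A, -, -, hxA, hLA⟩ := htr {x₀} (insert x₀ (q '' 𝒯)) isCompact_singleton
    (singleton_nonempty x₀) ((h𝒯.image q).insert x₀).isCompact (insert_nonempty _ _) _
    (mem_nhds_uniformity_iff_right.1 (hSo.mem_nhds hx₀)) _ hV
  refine ⟨n, hn, fun T hT' => ?_⟩
  obtain ⟨_, ⟨a, haA, rfl⟩, haT⟩ := hLA.1 (mem_insert_of_mem _ (mem_image_of_mem q hT'))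
  obtain ⟨_, rfl, hx₀a⟩ := hxA.2 haA
  exact ⟨a, hx₀a rfl, mem_iInter₂.1 haT T hT' rfl⟩

lemma HyperspaceTransitive.exists_isOpen_mapsTo (htr : HyperspaceTransitive f)
    (hf : Continuous f) [Nonempty X] {ι : Type*} {P Q : ι → Set X}
    (hPo : ∀ i, IsOpen (P i)) (hPne : ∀ i, (P i).Nonempty)
    (hQo : ∀ i, IsOpen (Q i)) (hQne : ∀ i, (Q i).Nonempty) (s : Finset ι) :
    ∃ W : Set X, IsOpen W ∧ W.Nonempty ∧ ∃ t : ι → ℕ,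
      ∀ i ∈ s, MapsTo f^[t i] W (P i) ∧ (f^[t i] ⁻¹' Q i).Nonempty := by
  classical
  induction s using Finset.induction_on with
  | empty => exact ⟨univ, isOpen_univ, univ_nonempty, fun _ => 0, by simp⟩
  | insert a s ha ih =>
    obtain ⟨W, hWo, hWne, t, ht⟩ := ih
    obtain ⟨k, -, hk⟩ := htr.exists_iterate_inter_preimage_nonempty hWo hWne
      (𝒯 := {P a, Q a}) (toFinite _) (by simp [hPo a, hPne a, hQo a, hQne a])
    obtain ⟨x, hxW, hxP⟩ := hk (P a) (by simp)
    obtain ⟨y, -, hyQ⟩ := hk (Q a) (by simp)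
    refine ⟨W ∩ f^[k] ⁻¹' P a, hWo.inter ((hPo a).preimage (hf.iterate k)), ⟨x, hxW, hxP⟩,
      Function.update t a k, fun i hi => ?_⟩
    rcases Finset.mem_insert.1 hi with rfl | hi
    · rw [Function.update_self]
      exact ⟨fun z hz => hz.2, y, hyQ⟩
    · rw [Function.update_of_ne (ne_of_mem_of_not_mem hi ha)]
      exact ⟨(ht i hi).1.mono_left inter_subset_left, (ht i hi).2⟩

/-- Weak mixing of all orders: all sources are pulled back into one open set `W`
by `exists_isOpen_mapsTo`, and `f^[n]` commutes with the pull-back times `f^[t i]`. -/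
lemma HyperspaceTransitive.exists_common_iterate (htr : HyperspaceTransitive f)
    (hf : Continuous f) [Nonempty X] {ι : Type*} [Finite ι] {P Q : ι → Set X}
    (hPo : ∀ i, IsOpen (P i)) (hPne : ∀ i, (P i).Nonempty)
    (hQo : ∀ i, IsOpen (Q i)) (hQne : ∀ i, (Q i).Nonempty) :
    ∃ n, 0 < n ∧ ∀ i, (P i ∩ f^[n] ⁻¹' Q i).Nonempty := by
  have := Fintype.ofFinite ι
  obtain ⟨W, hWo, hWne, t, ht⟩ := htr.exists_isOpen_mapsTo hf hPo hPne hQo hQne Finset.univ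
  obtain ⟨n, hn, hhit⟩ := htr.exists_iterate_inter_preimage_nonempty hWo hWne
    (finite_range fun i => f^[t i] ⁻¹' Q i)
    (forall_mem_range.2 fun i => ⟨(hQo i).preimage (hf.iterate _), (ht i (Finset.mem_univ i)).2⟩)
  refine ⟨n, hn, fun i => ?_⟩
  obtain ⟨y, hyW, hyQ⟩ := hhit _ ⟨i, rfl⟩
  refine ⟨f^[t i] y, (ht i (Finset.mem_univ i)).1 hyW, ?_⟩
  rwa [mem_preimage, ← Function.iterate_add_apply, add_comm, Function.iterate_add_apply]

end Dynamics

section Shadowing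

variable {f : X → X} {Ω : Set (X × X)} {P Q : Set (X × ℝ)}

lemma kRel_upperPoints_image (hΩs : SetRel.IsSymm Ω) {ι : Type*} (π : ι → X × ℝ)
    (y : ι → X) (b : ι → ℝ) (hπ : ∀ i, π i ∈ P) (hb : ∀ i, b i ≤ (π i).2)
    (hy : ∀ i, ((π i).1, y i) ∈ Ω) (hsec : ∀ p ∈ P, ∃ i, π i = p ∧ b i = p.2) (α : ℝ) :
    KRel Ω (upperPoints P α) (y '' {i | α ≤ b i}) := by
  constructor
  · rintro x ⟨c, hc, hxc⟩
    obtain ⟨i, hi, hbi⟩ := hsec _ hxc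
    refine ⟨y i, ⟨i, show α ≤ b i from hbi ▸ hc, rfl⟩, hΩs.symm _ _ ?_⟩
    simpa [hi] using hy i
  · rintro _ ⟨i, hi, rfl⟩
    exact ⟨(π i).1, ⟨(π i).2, hi.trans (hb i), hπ i⟩, hy i⟩

variable [UniformSpace X]

/-- Pair every point of `P` with every point of `Q`, at the lower of the two levels, and
shadow each pair by one orbit segment of length `n`; pairing with a point of level `1`
keeps every level of `P` and of `Q`. -/
lemma HyperspaceTransitive.exists_kRel_upperPoints (htr : HyperspaceTransitive f)
    (hf : Continuous f) (hΩ : Ω ∈ 𝓤 X) (hΩo : IsOpen Ω) (hΩs : SetRel.IsSymm Ω)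
    (hP : P.Finite) (hQ : Q.Finite) (hPlev : ∀ p ∈ P, p.2 ∈ Ioc 0 1)
    (hQlev : ∀ q ∈ Q, q.2 ∈ Ioc 0 1) (hP1 : ∃ x, (x, 1) ∈ P) (hQ1 : ∃ y, (y, 1) ∈ Q) :
    ∃ n, 0 < n ∧ ∃ R : Set (X × ℝ), R.Finite ∧ (∀ r ∈ R, r.2 ∈ Ioc 0 1) ∧ (∃ x, (x, 1) ∈ R) ∧
      ∀ α, KRel Ω (upperPoints P α) (upperPoints R α) ∧
        KRel Ω (upperPoints Q α) (f^[n] '' upperPoints R α) := by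
  obtain ⟨x₁, hx₁⟩ := hP1
  obtain ⟨y₁, hy₁⟩ := hQ1
  have : Nonempty X := ⟨x₁⟩
  have := hP.to_subtype
  have := hQ.to_subtype
  obtain ⟨n, hn, hmix⟩ := htr.exists_common_iterate hf (ι := P × Q)
    (P := fun i => UniformSpace.ball i.1.1.1 Ω) (Q := fun i => UniformSpace.ball i.2.1.1 Ω)
    (fun _ => UniformSpace.isOpen_ball _ hΩo) (fun _ => ⟨_, UniformSpace.mem_ball_self _ hΩ⟩)
    (fun _ => UniformSpace.isOpen_ball _ hΩo) (fun _ => ⟨_, UniformSpace.mem_ball_self _ hΩ⟩)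
  choose x hx using hmix
  set b : P × Q → ℝ := fun i => min i.1.1.2 i.2.1.2
  refine ⟨n, hn, range fun i => (x i, b i), finite_range _, ?_,
    ⟨x (⟨_, hx₁⟩, ⟨_, hy₁⟩), ⟨(⟨_, hx₁⟩, ⟨_, hy₁⟩), by simp [b]⟩⟩, fun α => ?_⟩
  · rintro _ ⟨i, rfl⟩
    exact ⟨lt_min (hPlev _ i.1.2).1 (hQlev _ i.2.2).1, min_le_of_left_le (hPlev _ i.1.2).2⟩
  rw [upperPoints_range, image_image]
  constructor
  · exact kRel_upperPoints_image hΩs (fun i : P × Q => i.1.1) x b (fun i => i.1.2)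
      (fun _ => min_le_left _ _) (fun i => (hx i).1)
      (fun p hp => ⟨(⟨p, hp⟩, ⟨_, hy₁⟩), rfl, min_eq_left (hPlev p hp).2⟩) α
  · exact kRel_upperPoints_image hΩs (fun i : P × Q => i.2.1) (fun i => f^[n] (x i)) b
      (fun i => i.2.2) (fun _ => min_le_right _ _) (fun i => (hx i).2)
      (fun q hq => ⟨(⟨_, hx₁⟩, ⟨q, hq⟩), rfl, min_eq_right (hQlev q hq).2⟩) α

end Shadowing

end

/-- If the induced map `K ↦ f(K)` is topologically transitive on the hyperspace
`(𝒦(X), 𝒦(𝒰))` (stated via basic Hausdorff-uniformity balls), then the Zadeh extension is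
topologically transitive on `(ℱ(X), 𝒰_∞)` (stated via basic level-wise balls). -/
theorem stmt16 {X : Type*} [UniformSpace X] {f : X → X} (hf : Continuous f)
    (htrans : ∀ K L : Set X, IsCompact K → K.Nonempty → IsCompact L → L.Nonempty →
      ∀ U ∈ 𝓤 X, ∀ V ∈ 𝓤 X, ∃ n : ℕ, 0 < n ∧ ∃ A : Set X, IsCompact A ∧ A.Nonempty ∧
        KRel U K A ∧ KRel V L (f^[n] '' A)) :
    ∀ u v : X → ℝ, IsFuzzySet u → IsFuzzySet v → ∀ U ∈ 𝓤 X, ∀ V ∈ 𝓤 X,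
      ∃ n : ℕ, 0 < n ∧ ∃ w : X → ℝ, IsFuzzySet w ∧ FRel U u w ∧
        FRel V v ((zadeh f)^[n] w) := by
  intro u v hu hv U hU V hV
  obtain ⟨Ω, hΩ, hΩo, hΩs, hΩUV⟩ := exists_isOpen_isSymm_comp_subset (inter_mem hU hV)
  have hΩ₂ : Ω ○ Ω ∈ 𝓤 X := mem_of_superset hΩ (subset_comp_self_of_mem_uniformity hΩ)
  have := isRefl_of_mem_uniformity hΩ₂
  have hΩ₃ : Ω ○ (Ω ○ Ω) ∈ 𝓤 X := mem_of_superset hΩ SetRel.left_subset_comp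
  obtain ⟨P, hP⟩ := hu.exists_isLevelNet hΩ hΩo hΩs
  obtain ⟨Q, hQ⟩ := hv.exists_isLevelNet hΩ hΩo hΩs
  obtain ⟨n, hn, R, hR, hRlev, hR1, hPQR⟩ := HyperspaceTransitive.exists_kRel_upperPoints htrans
    hf hΩ hΩo hΩs hP.finite hQ.finite hP.level_mem hQ.level_mem (hP.exists_mem_one hu)
    (hQ.exists_mem_one hv)
  have hRpos : ∀ r ∈ R, 0 < r.2 := fun r hr => (hRlev r hr).1
  refine ⟨n, hn, stepFuzzy R, isFuzzySet_stepFuzzy hR hRlev hR1, fun α hα => ?_, fun α hα => ?_⟩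
  · have hcut := fuzzyCut_stepFuzzy hR hRpos hα.1
    exact ((hP.kRel hΩ₂ hα (hPQR α).1).of_subset_closure hΩ₃ (hcut ▸ subset_closure)
      hcut.le).mono (hΩUV.trans inter_subset_left)
  · obtain ⟨hsub, hsup⟩ := fuzzyCut_zadeh_iterate_stepFuzzy hf hR hRpos hα.1 n
    exact ((hQ.kRel hΩ₂ hα (hPQR α).2).of_subset_closure hΩ₃ hsub hsup).mono
      (hΩUV.trans inter_subset_right)
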